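/- arXiv:2407.00857 — 3 statements merged into one kernel-verified Lean document; each statement's English description precedes it below -/
import Mathlib

section
/- Let K be a bounded operator on H₁ and L a bounded operator on H₂. Let {xₙ}ₙ≥1 be a K-frame for H₁ and {yₙ}ₙ≥1 an L-frame for H₂, with analysis operators θ₁ and θ₂ respectively. If the range of θ₁ is orthogonal to the range of θ₂ in ℓ², then {xₙ ⊕ yₙ}ₙ≥1 is a K ⊕ L-frame for H₁ ⊕ H₂. -/
noncomputable section

open scoped ENNReal

/-- The sequence of direct sums `xₙ ⊕ yₙ` in the super Hilbert space `H₁ ⊕ H₂`,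
realized as `WithLp 2 (H₁ × H₂)`. -/
def pairSeq {H₁ H₂ : Type*} [NormedAddCommGroup H₁] [NormedAddCommGroup H₂]
    (x : ℕ → H₁) (y : ℕ → H₂) : ℕ → WithLp 2 (H₁ × H₂) :=
  fun n => (WithLp.equiv 2 (H₁ × H₂)).symm (x n, y n)

/-- A sequence `{xₙ}` is a Bessel sequence: there is `B > 0` with
`∑ₙ |⟨v, xₙ⟩|² ≤ B‖v‖²` for all `v` (in particular the series converges). -/
def IsBessel {H : Type*} [NormedAddCommGroup H] [InnerProductSpace ℂ H] (x : ℕ → H) : Prop :=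
  ∃ B : ℝ, 0 < B ∧ ∀ v : H, Summable (fun n => ‖(inner ℂ v (x n) : ℂ)‖ ^ 2) ∧
    ∑' n, ‖(inner ℂ v (x n) : ℂ)‖ ^ 2 ≤ B * ‖v‖ ^ 2

/-- A sequence `{xₙ}` is a `K`-frame: there are `A, B > 0` with
`A‖K*v‖² ≤ ∑ₙ |⟨v, xₙ⟩|² ≤ B‖v‖²` for all `v`. -/
def IsKFrame {H : Type*} [NormedAddCommGroup H] [InnerProductSpace ℂ H] [CompleteSpace H]
    (K : H →L[ℂ] H) (x : ℕ → H) : Prop :=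
  ∃ A B : ℝ, 0 < A ∧ 0 < B ∧ ∀ v : H, Summable (fun n => ‖(inner ℂ v (x n) : ℂ)‖ ^ 2) ∧
    A * ‖K.adjoint v‖ ^ 2 ≤ ∑' n, ‖(inner ℂ v (x n) : ℂ)‖ ^ 2 ∧
    ∑' n, ‖(inner ℂ v (x n) : ℂ)‖ ^ 2 ≤ B * ‖v‖ ^ 2

/-- The operator `K ⊕ L` on the super Hilbert space `H₁ ⊕ H₂`,
`(K ⊕ L)(x ⊕ y) = Kx ⊕ Ly`. -/
def dsum {H₁ H₂ : Type*}
    [NormedAddCommGroup H₁] [InnerProductSpace ℂ H₁]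
    [NormedAddCommGroup H₂] [InnerProductSpace ℂ H₂]
    (K : H₁ →L[ℂ] H₁) (L : H₂ →L[ℂ] H₂) :
    WithLp 2 (H₁ × H₂) →L[ℂ] WithLp 2 (H₁ × H₂) :=
  ((WithLp.prodContinuousLinearEquiv 2 ℂ H₁ H₂).symm : (H₁ × H₂) →L[ℂ] WithLp 2 (H₁ × H₂)) ∘L
    (K.prodMap L) ∘L
    ((WithLp.prodContinuousLinearEquiv 2 ℂ H₁ H₂) : WithLp 2 (H₁ × H₂) →L[ℂ] (H₁ × H₂))

variable {H₁ H₂ : Type*}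
  [NormedAddCommGroup H₁] [InnerProductSpace ℂ H₁] [CompleteSpace H₁]
  [TopologicalSpace.SeparableSpace H₁]
  [NormedAddCommGroup H₂] [InnerProductSpace ℂ H₂] [CompleteSpace H₂]
  [TopologicalSpace.SeparableSpace H₂]


/- Orthogonality of the ranges of `θ₁` and `θ₂` is exactly what kills the cross terms
`2 Re ∑ₙ ⟨u, xₙ⟩‾ ⟨v, yₙ⟩` in `∑ₙ |⟨u, xₙ⟩ + ⟨v, yₙ⟩|²`: by Pythagoras in `ℓ²` the frame
sum of `{xₙ ⊕ yₙ}` at `u ⊕ v` is the sum of the frame sums of `{xₙ}` at `u` and `{yₙ}` at `v`.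
Since `(K ⊕ L)* = K* ⊕ L*` and norms in `H₁ ⊕ H₂` add in square, the bounds
`min A₁ A₂` and `max B₁ B₂` then follow. -/

theorem lp.hasSum_norm_sq {ι : Type*} {E : ι → Type*} [∀ i, NormedAddCommGroup (E i)]
    (f : lp E 2) : HasSum (fun i => ‖f i‖ ^ 2) (‖f‖ ^ 2) := by
  have h := lp.hasSum_norm (p := 2) (by norm_num) f
  simp only [ENNReal.toReal_ofNat, Real.rpow_two] at h
  exact h

section DirectSum

variable {𝕜 E F : Type*} [RCLike 𝕜]
  [NormedAddCommGroup E] [InnerProductSpace 𝕜 E] [NormedAddCommGroup F] [InnerProductSpace 𝕜 F]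

theorem inner_pairSeq (x : ℕ → E) (y : ℕ → F) (w : WithLp 2 (E × F)) (n : ℕ) :
    inner 𝕜 w (pairSeq x y n) = inner 𝕜 w.fst (x n) + inner 𝕜 w.snd (y n) :=
  WithLp.prod_inner_apply w (pairSeq x y n)

end DirectSum

section DirectSumOperator

variable {E F : Type*}
  [NormedAddCommGroup E] [InnerProductSpace ℂ E] [NormedAddCommGroup F] [InnerProductSpace ℂ F]

theorem norm_sq_dsum_apply (K : E →L[ℂ] E) (L : F →L[ℂ] F) (w : WithLp 2 (E × F)) :
    ‖dsum K L w‖ ^ 2 = ‖K w.fst‖ ^ 2 + ‖L w.snd‖ ^ 2 :=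
  WithLp.prod_norm_sq_eq_of_L2 _

variable [CompleteSpace E] [CompleteSpace F]

theorem dsum_adjoint (K : E →L[ℂ] E) (L : F →L[ℂ] F) :
    (dsum K L).adjoint = dsum K.adjoint L.adjoint := by
  symm
  rw [ContinuousLinearMap.eq_adjoint_iff]
  intro w z
  simp [dsum, WithLp.prod_inner_apply, ContinuousLinearMap.adjoint_inner_left]

theorem IsKFrame.dsum_of_hasSum {K : E →L[ℂ] E} {L : F →L[ℂ] F} {x : ℕ → E} {y : ℕ → F}
    {z : ℕ → WithLp 2 (E × F)} (hx : IsKFrame K x) (hy : IsKFrame L y)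
    (hz : ∀ w : WithLp 2 (E × F), HasSum (fun n => ‖(inner ℂ w (z n) : ℂ)‖ ^ 2)
      ((∑' n, ‖(inner ℂ w.fst (x n) : ℂ)‖ ^ 2) + ∑' n, ‖(inner ℂ w.snd (y n) : ℂ)‖ ^ 2)) :
    IsKFrame (dsum K L) z := by
  obtain ⟨A₁, B₁, hA₁, hB₁, hx⟩ := hx
  obtain ⟨A₂, B₂, hA₂, -, hy⟩ := hy
  refine ⟨min A₁ A₂, max B₁ B₂, lt_min hA₁ hA₂, lt_max_of_lt_left hB₁, fun w => ?_⟩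
  obtain ⟨-, hlo₁, hup₁⟩ := hx w.fst
  obtain ⟨-, hlo₂, hup₂⟩ := hy w.snd
  refine ⟨(hz w).summable, ?_, ?_⟩
  · rw [(hz w).tsum_eq, dsum_adjoint, norm_sq_dsum_apply]
    have h₁ := mul_le_mul_of_nonneg_right (min_le_left A₁ A₂) (sq_nonneg ‖K.adjoint w.fst‖)
    have h₂ := mul_le_mul_of_nonneg_right (min_le_right A₁ A₂) (sq_nonneg ‖L.adjoint w.snd‖)
    linarith
  · rw [(hz w).tsum_eq, WithLp.prod_norm_sq_eq_of_L2 w]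
    have h₁ := mul_le_mul_of_nonneg_right (le_max_left B₁ B₂) (sq_nonneg ‖w.fst‖)
    have h₂ := mul_le_mul_of_nonneg_right (le_max_right B₁ B₂) (sq_nonneg ‖w.snd‖)
    linarith

end DirectSumOperator

/-- if `{xₙ}` is a `K`-frame for `H₁` and `{yₙ}` is an `L`-frame for `H₂` whose
analysis operators `θ₁, θ₂` have orthogonal ranges in `ℓ²`, then `{xₙ ⊕ yₙ}` is a
`K ⊕ L`-frame for `H₁ ⊕ H₂`. -/
theorem pair_kframe_of_orthogonal_ranges (K : H₁ →L[ℂ] H₁) (L : H₂ →L[ℂ] H₂)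
    (x : ℕ → H₁) (y : ℕ → H₂)
    (hx : IsKFrame K x) (hy : IsKFrame L y)
    (θ₁ : H₁ → lp (fun _ : ℕ => ℂ) 2)
    (hθ₁ : ∀ (u : H₁) (n : ℕ), θ₁ u n = (inner ℂ u (x n) : ℂ))
    (θ₂ : H₂ → lp (fun _ : ℕ => ℂ) 2)
    (hθ₂ : ∀ (v : H₂) (n : ℕ), θ₂ v n = (inner ℂ v (y n) : ℂ))
    (horth : ∀ (u : H₁) (v : H₂), (inner ℂ (θ₁ u) (θ₂ v) : ℂ) = 0) :
    IsKFrame (dsum K L) (pairSeq x y) := by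
  refine hx.dsum_of_hasSum hy fun w => ?_
  have hpyth : ‖θ₁ w.fst + θ₂ w.snd‖ ^ 2 = ‖θ₁ w.fst‖ ^ 2 + ‖θ₂ w.snd‖ ^ 2 := by
    simpa only [sq] using norm_add_sq_eq_norm_sq_add_norm_sq_of_inner_eq_zero _ _ (horth _ _)
  have hsum₁ : ‖θ₁ w.fst‖ ^ 2 = ∑' n, ‖(inner ℂ w.fst (x n) : ℂ)‖ ^ 2 := by
    simpa only [hθ₁] using (lp.hasSum_norm_sq (θ₁ w.fst)).tsum_eq.symm
  have hsum₂ : ‖θ₂ w.snd‖ ^ 2 = ∑' n, ‖(inner ℂ w.snd (y n) : ℂ)‖ ^ 2 := by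
    simpa only [hθ₂] using (lp.hasSum_norm_sq (θ₂ w.snd)).tsum_eq.symm
  rw [← hsum₁, ← hsum₂, ← hpyth]
  simpa only [inner_pairSeq, lp.coeFn_add, Pi.add_apply, hθ₁, hθ₂]
    using lp.hasSum_norm_sq (θ₁ w.fst + θ₂ w.snd)
end
end

section
/- Let K be a bounded operator on H₁ and L a bounded operator on H₂. Let {xₙ}ₙ≥1 be a K-frame for H₁ with K-dual frame {fₙ}ₙ≥1, and let {yₙ}ₙ≥1 be an L-frame for H₂ with L-dual frame {gₙ}ₙ≥1. Let T₁ and T₂ be the synthesis operators of {xₙ}ₙ≥1 and {yₙ}ₙ≥1, and let θ₁ and θ₂ be the analysis operators of {fₙ}ₙ≥1 and {gₙ}ₙ≥1. Then the following are equivalent: (i) {xₙ ⊕ yₙ}ₙ≥1 is a K ⊕ L-frame for H₁ ⊕ H₂ with {fₙ ⊕ gₙ}ₙ≥1 as a K ⊕ L-dual frame; (ii) T₂θ₁ = 0 and T₁θ₂ = 0. -/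
noncomputable section

open scoped ENNReal

variable {H₁ H₂ : Type*}
  [NormedAddCommGroup H₁] [InnerProductSpace ℂ H₁] [CompleteSpace H₁]
  [TopologicalSpace.SeparableSpace H₁]
  [NormedAddCommGroup H₂] [InnerProductSpace ℂ H₂] [CompleteSpace H₂]
  [TopologicalSpace.SeparableSpace H₂]

/-- A Bessel sequence `{fₙ}` is a `K`-dual frame to `{xₙ}` if `Kv = ∑ₙ ⟨v, fₙ⟩ xₙ` for all `v`
(with the inner product linear in `v`). -/
def IsKDual {H : Type*} [NormedAddCommGroup H] [InnerProductSpace ℂ H] [CompleteSpace H]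
    (K : H →L[ℂ] H) (f x : ℕ → H) : Prop :=
  IsBessel f ∧ ∀ v : H, HasSum (fun n => (inner ℂ (f n) v : ℂ) • x n) (K v)

/-! Since `⟨fₙ ⊕ gₙ, u ⊕ w⟩ = ⟨fₙ, u⟩ + ⟨gₙ, w⟩`, the series `∑ₙ ⟨fₙ ⊕ gₙ, u ⊕ w⟩ (xₙ ⊕ yₙ)` has
components `Ku + T₁θ₂w` and `T₂θ₁u + Lw`, so it sums to `(K ⊕ L)(u ⊕ w)` for all `u, w` exactly
when the cross terms `T₁θ₂` and `T₂θ₁` vanish. The frame property of `{xₙ ⊕ yₙ}` then comes for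
free: a Bessel sequence with a Bessel `K`-dual is a `K`-frame, because
`‖K*u‖² = ∑ₙ ⟨fₙ, K*u⟩⟨u, xₙ⟩ ≤ √B ‖K*u‖ (∑ₙ |⟨u, xₙ⟩|²)^(1/2)` by Cauchy–Schwarz, where `B` is a
Bessel bound of `{fₙ}`. -/

theorem Real.summable_mul_and_tsum_mul_le_sqrt_mul_sqrt {ι : Type*} {r s : ι → ℝ}
    (hr0 : ∀ i, 0 ≤ r i) (hs0 : ∀ i, 0 ≤ s i) (hr : Summable (fun i => r i ^ 2))
    (hs : Summable (fun i => s i ^ 2)) :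
    Summable (fun i => r i * s i) ∧
      ∑' i, r i * s i ≤ √(∑' i, r i ^ 2) * √(∑' i, s i ^ 2) := by
  simpa [Real.sqrt_eq_rpow] using Real.summable_and_inner_le_Lp_mul_Lq_tsum_of_nonneg
    Real.HolderConjugate.two_two hr0 hs0 (by simpa using hr) (by simpa using hs)

section Frames

variable {E F : Type*} [NormedAddCommGroup E] [InnerProductSpace ℂ E]
  [NormedAddCommGroup F] [InnerProductSpace ℂ F]

theorem IsKFrame.isBessel [CompleteSpace E] {K : E →L[ℂ] E} {x : ℕ → E} (hx : IsKFrame K x) :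
    IsBessel x :=
  let ⟨_, B, _, hB, h⟩ := hx
  ⟨B, hB, fun v => ⟨(h v).1, (h v).2.2⟩⟩

theorem norm_adjoint_apply_sq_le_mul_tsum [CompleteSpace E] (K : E →L[ℂ] E) {f x : ℕ → E} {B : ℝ}
    (hB : 0 ≤ B) (hf : ∀ v : E, Summable (fun n => ‖(inner ℂ v (f n) : ℂ)‖ ^ 2) ∧
      ∑' n, ‖(inner ℂ v (f n) : ℂ)‖ ^ 2 ≤ B * ‖v‖ ^ 2)
    (hK : ∀ v : E, HasSum (fun n => (inner ℂ (f n) v : ℂ) • x n) (K v))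
    {u : E} (hu : Summable (fun n => ‖(inner ℂ u (x n) : ℂ)‖ ^ 2)) :
    ‖K.adjoint u‖ ^ 2 ≤ B * ∑' n, ‖(inner ℂ u (x n) : ℂ)‖ ^ 2 := by
  set w := K.adjoint u
  set S := ∑' n, ‖(inner ℂ u (x n) : ℂ)‖ ^ 2
  have hwK : HasSum (fun n => (inner ℂ (f n) w : ℂ) * inner ℂ u (x n)) (inner ℂ w w) := by
    rw [ContinuousLinearMap.adjoint_inner_left]
    simpa [inner_smul_right] using (hK w).mapL (innerSL ℂ u)
  have hfw := hf w
  simp_rw [norm_inner_symm w] at hfw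
  obtain ⟨hsum, hcs⟩ := Real.summable_mul_and_tsum_mul_le_sqrt_mul_sqrt
    (fun n => norm_nonneg _) (fun n => norm_nonneg _) hfw.1 hu
  have hw : ‖w‖ ^ 2 ≤ √(B * S) * ‖w‖ := calc
    ‖w‖ ^ 2 = ‖∑' n, (inner ℂ (f n) w : ℂ) * inner ℂ u (x n)‖ := by
      rw [hwK.tsum_eq, inner_self_eq_norm_sq_to_K, norm_pow, RCLike.norm_ofReal, abs_norm]
    _ ≤ ∑' n, ‖(inner ℂ (f n) w : ℂ) * inner ℂ u (x n)‖ :=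
      norm_tsum_le_tsum_norm (by simpa only [norm_mul] using hsum)
    _ = ∑' n, ‖(inner ℂ (f n) w : ℂ)‖ * ‖(inner ℂ u (x n) : ℂ)‖ := by simp only [norm_mul]
    _ ≤ √(∑' n, ‖(inner ℂ (f n) w : ℂ)‖ ^ 2) * √S := hcs
    _ ≤ √(B * ‖w‖ ^ 2) * √S := by gcongr; exact hfw.2
    _ = √(B * S) * ‖w‖ := by
      rw [Real.sqrt_mul hB, Real.sqrt_sq (norm_nonneg w), Real.sqrt_mul hB]; ring
  have hS : 0 ≤ S := tsum_nonneg fun n => sq_nonneg _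
  calc ‖w‖ ^ 2 ≤ √(B * S) ^ 2 := by
        gcongr
        rcases (norm_nonneg w).eq_or_lt with h0 | h0
        · rw [← h0]; positivity
        · exact le_of_mul_le_mul_right (by nlinarith) h0
    _ = B * S := Real.sq_sqrt (mul_nonneg hB hS)

theorem IsKDual.isKFrame [CompleteSpace E] {K : E →L[ℂ] E} {f x : ℕ → E} (hfx : IsKDual K f x)
    (hx : IsBessel x) : IsKFrame K x := by
  obtain ⟨⟨B, hB, hf⟩, hK⟩ := hfx
  obtain ⟨C, hC, hx⟩ := hx
  refine ⟨B⁻¹, C, inv_pos.2 hB, hC, fun u => ⟨(hx u).1, ?_, (hx u).2⟩⟩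
  rw [inv_mul_le_iff₀ hB]
  exact norm_adjoint_apply_sq_le_mul_tsum K hB.le hf hK (hx u).1

theorem inner_pairSeq_left (f : ℕ → E) (g : ℕ → F) (v : WithLp 2 (E × F)) (n : ℕ) :
    (inner ℂ (pairSeq f g n) v : ℂ) = inner ℂ (f n) v.fst + inner ℂ (g n) v.snd := by
  simp [pairSeq, WithLp.prod_inner_apply]

theorem inner_pairSeq_right (x : ℕ → E) (y : ℕ → F) (v : WithLp 2 (E × F)) (n : ℕ) :
    (inner ℂ v (pairSeq x y n) : ℂ) = inner ℂ v.fst (x n) + inner ℂ v.snd (y n) := by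
  simp [pairSeq, WithLp.prod_inner_apply]

theorem isBessel_pairSeq {x : ℕ → E} {y : ℕ → F} (hx : IsBessel x) (hy : IsBessel y) :
    IsBessel (pairSeq x y) := by
  obtain ⟨Bx, hBx, hx⟩ := hx
  obtain ⟨By, hBy, hy⟩ := hy
  refine ⟨2 * (Bx + By), by positivity, fun v => ?_⟩
  have hle : ∀ n, ‖(inner ℂ v (pairSeq x y n) : ℂ)‖ ^ 2 ≤
      2 * (‖(inner ℂ v.fst (x n) : ℂ)‖ ^ 2 + ‖(inner ℂ v.snd (y n) : ℂ)‖ ^ 2) := fun n => by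
    rw [inner_pairSeq_right]
    exact (pow_le_pow_left₀ (norm_nonneg _) (norm_add_le _ _) 2).trans add_sq_le
  have hsum := ((hx v.fst).1.add (hy v.snd).1).mul_left 2
  have hsum' := hsum.of_nonneg_of_le (fun n => sq_nonneg _) hle
  refine ⟨hsum', ?_⟩
  calc ∑' n, ‖(inner ℂ v (pairSeq x y n) : ℂ)‖ ^ 2
      ≤ 2 * (∑' n, ‖(inner ℂ v.fst (x n) : ℂ)‖ ^ 2 + ∑' n, ‖(inner ℂ v.snd (y n) : ℂ)‖ ^ 2) := by
        rw [← (hx v.fst).1.tsum_add (hy v.snd).1, ← tsum_mul_left]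
        exact hsum'.tsum_le_tsum hle hsum
    _ ≤ 2 * (Bx * ‖v.fst‖ ^ 2 + By * ‖v.snd‖ ^ 2) := by
        gcongr
        exacts [(hx v.fst).2, (hy v.snd).2]
    _ ≤ 2 * (Bx + By) * ‖v‖ ^ 2 := by
        rw [WithLp.prod_norm_sq_eq_of_L2]
        nlinarith [sq_nonneg ‖v.fst‖, sq_nonneg ‖v.snd‖]

theorem hasSum_smul_pairSeq_iff {c : ℕ → ℂ} {x : ℕ → E} {y : ℕ → F} {v : WithLp 2 (E × F)} :
    HasSum (fun n => c n • pairSeq x y n) v ↔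
      HasSum (fun n => c n • x n) v.fst ∧ HasSum (fun n => c n • y n) v.snd := by
  constructor
  · intro h
    exact ⟨h.mapL (WithLp.fstL 2 ℂ E F), h.mapL (WithLp.sndL 2 ℂ E F)⟩
  · rintro ⟨h₁, h₂⟩
    exact (WithLp.prodContinuousLinearEquiv 2 ℂ E F).symm.hasSum.2 (h₁.prodMk h₂)

theorem dsum_apply_fst (K : E →L[ℂ] E) (L : F →L[ℂ] F) (v : WithLp 2 (E × F)) :
    (dsum K L v).fst = K v.fst :=
  rfl

theorem dsum_apply_snd (K : E →L[ℂ] E) (L : F →L[ℂ] F) (v : WithLp 2 (E × F)) :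
    (dsum K L v).snd = L v.snd :=
  rfl

theorem isKDual_pairSeq_iff [CompleteSpace E] [CompleteSpace F] {K : E →L[ℂ] E} {L : F →L[ℂ] F}
    {x f : ℕ → E} {y g : ℕ → F} (hf : IsKDual K f x) (hg : IsKDual L g y) :
    IsKDual (dsum K L) (pairSeq f g) (pairSeq x y) ↔
      (∀ u : E, HasSum (fun n => (inner ℂ (f n) u : ℂ) • y n) 0) ∧
        ∀ w : F, HasSum (fun n => (inner ℂ (g n) w : ℂ) • x n) 0 := by
  have hx (v : WithLp 2 (E × F)) :
      HasSum (fun n => (inner ℂ (pairSeq f g n) v : ℂ) • x n) (K v.fst) ↔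
        HasSum (fun n => (inner ℂ (g n) v.snd : ℂ) • x n) 0 := by
    simp only [inner_pairSeq_left, add_smul]
    exact ⟨fun h => by simpa using h.sub (hf.2 v.fst), fun h => by simpa using (hf.2 v.fst).add h⟩
  have hy (v : WithLp 2 (E × F)) :
      HasSum (fun n => (inner ℂ (pairSeq f g n) v : ℂ) • y n) (L v.snd) ↔
        HasSum (fun n => (inner ℂ (f n) v.fst : ℂ) • y n) 0 := by
    simp only [inner_pairSeq_left, add_smul]
    exact ⟨fun h => by simpa using h.sub (hg.2 v.snd), fun h => by simpa using h.add (hg.2 v.snd)⟩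
  simp only [IsKDual, isBessel_pairSeq hf.1 hg.1, true_and, hasSum_smul_pairSeq_iff,
    dsum_apply_fst, dsum_apply_snd, hx, hy]
  exact ⟨fun h => ⟨fun u => (h (WithLp.toLp 2 (u, 0))).2, fun w => (h (WithLp.toLp 2 (0, w))).1⟩,
    fun h v => ⟨h.2 v.snd, h.1 v.fst⟩⟩

theorem comp_eq_zero_iff_forall_hasSum_zero (T : lp (fun _ : ℕ => ℂ) 2 →L[ℂ] F) {y : ℕ → F}
    (hT : ∀ a : lp (fun _ : ℕ => ℂ) 2, HasSum (fun n => a n • y n) (T a))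
    (θ : E →L[ℂ] lp (fun _ : ℕ => ℂ) 2) {f : ℕ → E}
    (hθ : ∀ (u : E) (n : ℕ), θ u n = (inner ℂ (f n) u : ℂ)) :
    T ∘L θ = 0 ↔ ∀ u : E, HasSum (fun n => (inner ℂ (f n) u : ℂ) • y n) 0 := by
  simp only [ContinuousLinearMap.ext_iff, ContinuousLinearMap.comp_apply, zero_apply]
  refine forall_congr' fun u => ?_
  have hTθ := hT (θ u)
  simp only [hθ] at hTθ
  exact ⟨fun h => h ▸ hTθ, hTθ.unique⟩

end Frames

/-- let `{xₙ}` be a `K`-frame for `H₁` with `K`-dual `{fₙ}` and `{yₙ}` an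
`L`-frame for `H₂` with `L`-dual `{gₙ}`; let `T₁, T₂` be the synthesis operators of
`{xₙ}, {yₙ}` and `θ₁, θ₂` the analysis operators of `{fₙ}, {gₙ}`. Then `{xₙ ⊕ yₙ}` is a
`K ⊕ L`-frame with `{fₙ ⊕ gₙ}` as a `K ⊕ L`-dual frame iff `T₂θ₁ = 0` and `T₁θ₂ = 0`. -/
theorem pair_dual_iff (K : H₁ →L[ℂ] H₁) (L : H₂ →L[ℂ] H₂)
    (x f : ℕ → H₁) (y g : ℕ → H₂)
    (hx : IsKFrame K x) (hf : IsKDual K f x)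
    (hy : IsKFrame L y) (hg : IsKDual L g y)
    (T₁ : lp (fun _ : ℕ => ℂ) 2 →L[ℂ] H₁)
    (hT₁ : ∀ a : lp (fun _ : ℕ => ℂ) 2, HasSum (fun n => a n • x n) (T₁ a))
    (T₂ : lp (fun _ : ℕ => ℂ) 2 →L[ℂ] H₂)
    (hT₂ : ∀ a : lp (fun _ : ℕ => ℂ) 2, HasSum (fun n => a n • y n) (T₂ a))
    (θ₁ : H₁ →L[ℂ] lp (fun _ : ℕ => ℂ) 2)
    (hθ₁ : ∀ (u : H₁) (n : ℕ), θ₁ u n = (inner ℂ (f n) u : ℂ))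
    (θ₂ : H₂ →L[ℂ] lp (fun _ : ℕ => ℂ) 2)
    (hθ₂ : ∀ (v : H₂) (n : ℕ), θ₂ v n = (inner ℂ (g n) v : ℂ)) :
    (IsKFrame (dsum K L) (pairSeq x y) ∧
        IsKDual (dsum K L) (pairSeq f g) (pairSeq x y)) ↔
      (T₂ ∘L θ₁ = 0 ∧ T₁ ∘L θ₂ = 0) := by
  rw [and_iff_right_of_imp fun h => h.isKFrame (isBessel_pairSeq hx.isBessel hy.isBessel),
    isKDual_pairSeq_iff hf hg, comp_eq_zero_iff_forall_hasSum_zero T₂ hT₂ θ₁ hθ₁,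
    comp_eq_zero_iff_forall_hasSum_zero T₁ hT₁ θ₂ hθ₂]
end
end

section
/- Let K be a nonzero bounded operator on H₁ and L a nonzero bounded operator on H₂, and suppose {xₙ ⊕ yₙ}ₙ≥1 is a K ⊕ L-orthonormal basis for H₁ ⊕ H₂. Then: (a) {K*(xₙ) ⊕ L*(yₙ)}ₙ≥1 is the unique K ⊕ L-dual frame to {xₙ ⊕ yₙ}ₙ≥1; (b) {xₙ}ₙ≥1 is a K-frame for H₁ that is not K-minimal and {K*(xₙ)}ₙ≥1 is a K-dual frame to it; (c) {yₙ}ₙ≥1 is an L-frame for H₂ that is not L-minimal and {L*(yₙ)}ₙ≥1 is an L-dual frame to it. -/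
noncomputable section

open scoped ENNReal

variable {H₁ H₂ : Type*}
  [NormedAddCommGroup H₁] [InnerProductSpace ℂ H₁] [CompleteSpace H₁]
  [TopologicalSpace.SeparableSpace H₁]
  [NormedAddCommGroup H₂] [InnerProductSpace ℂ H₂] [CompleteSpace H₂]
  [TopologicalSpace.SeparableSpace H₂]

/-- A sequence `{xₙ}` is a `K`-orthonormal basis if it is an orthonormal system and a
Parseval `K`-frame: `∑ₙ |⟨v, xₙ⟩|² = ‖K*v‖²` for all `v`. -/
def IsKONB {H : Type*} [NormedAddCommGroup H] [InnerProductSpace ℂ H] [CompleteSpace H]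
    (K : H →L[ℂ] H) (x : ℕ → H) : Prop :=
  Orthonormal ℂ x ∧
    ∀ v : H, HasSum (fun n => ‖(inner ℂ v (x n) : ℂ)‖ ^ 2) (‖K.adjoint v‖ ^ 2)


/-! Orthonormality of `{xₙ ⊕ yₙ}` and the Parseval identity force `(K ⊕ L)*` to vanish on the
orthogonal complement of the closed span of `{xₙ ⊕ yₙ}`, so the range of `K ⊕ L` lies in that span
and `(K ⊕ L)w = ∑ₙ ⟨xₙ ⊕ yₙ, (K ⊕ L)w⟩ (xₙ ⊕ yₙ) = ∑ₙ ⟨(K ⊕ L)*(xₙ ⊕ yₙ), w⟩ (xₙ ⊕ yₙ)`.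
Orthonormality also pins down the coefficients of any dual, which gives uniqueness. Projecting
onto the summands yields the statements for `{xₙ}` and `{yₙ}`. Testing the dual against `0 ⊕ u`
with `Lu ≠ 0` gives nonzero ℓ² coefficients that synthesize `0` from `{xₙ}` but `Lu` from `{yₙ}`,
so `{xₙ}` is not `K`-minimal; symmetrically for `{yₙ}`. -/

open Submodule

section Orthonormal

variable {𝕜 E ι : Type*} [RCLike 𝕜] [NormedAddCommGroup E] [InnerProductSpace 𝕜 E]
  {e : ι → E}

theorem Orthonormal.inner_left_eq_of_hasSum (he : Orthonormal 𝕜 e) {c : ι → 𝕜} {u : E}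
    (hu : HasSum (fun i => c i • e i) u) (j : ι) : inner 𝕜 (e j) u = c j := by
  classical
  refine (hu.mapL (innerSL 𝕜 (e j))).unique ?_
  convert hasSum_ite_eq j (c j) using 2 with i
  rcases eq_or_ne j i with rfl | hji
  · simp [he.1 j]
  · simp [he.2 hji, hji.symm]

theorem Orthonormal.hasSum_inner_smul_of_mem_closure [CompleteSpace E] (he : Orthonormal 𝕜 e)
    {u : E} (hu : u ∈ (span 𝕜 (Set.range e)).topologicalClosure) :
    HasSum (fun i => inner 𝕜 (e i) u • e i) u := by
  have hV := he.orthogonalFamily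
  have hrange : (span 𝕜 (Set.range e)).topologicalClosure =
      LinearMap.range hV.linearIsometry.toLinearMap := by
    rw [hV.range_linearIsometry]
    simp [← LinearMap.span_singleton_eq_range, ← Submodule.span_iUnion]
  obtain ⟨f, rfl⟩ := hrange ▸ hu
  have hf : HasSum (fun i => f i • e i) (hV.linearIsometry f) := hV.hasSum_linearIsometry f
  simp only [LinearIsometry.coe_toLinearMap, he.inner_left_eq_of_hasSum hf]
  exact hf

end Orthonormal

theorem ContinuousLinearMap.sq_norm_apply_le {𝕜 E F : Type*} [NontriviallyNormedField 𝕜]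
    [SeminormedAddCommGroup E] [SeminormedAddCommGroup F] [NormedSpace 𝕜 E] [NormedSpace 𝕜 F]
    (A : E →L[𝕜] F) (v : E) : ‖A v‖ ^ 2 ≤ (‖A‖ ^ 2 + 1) * ‖v‖ ^ 2 := by
  have hA : ‖A v‖ ≤ ‖A‖ * ‖v‖ := A.le_opNorm v
  nlinarith [norm_nonneg (A v), sq_nonneg ‖v‖]

theorem IsBessel.memℓp_inner {H : Type*} [NormedAddCommGroup H] [InnerProductSpace ℂ H]
    {f : ℕ → H} (hf : IsBessel f) (v : H) : Memℓp (fun n => (inner ℂ (f n) v : ℂ)) 2 := by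
  obtain ⟨_, _, hB⟩ := hf
  refine memℓp_gen ?_
  simpa [norm_inner_symm (f _) v] using (hB v).1

def IsParsevalKFrame {H : Type*} [NormedAddCommGroup H] [InnerProductSpace ℂ H] [CompleteSpace H]
    (K : H →L[ℂ] H) (x : ℕ → H) : Prop :=
  ∀ v : H, HasSum (fun n => ‖(inner ℂ v (x n) : ℂ)‖ ^ 2) (‖K.adjoint v‖ ^ 2)

section Frames

variable {H : Type*} [NormedAddCommGroup H] [InnerProductSpace ℂ H] [CompleteSpace H]
  {K : H →L[ℂ] H} {x : ℕ → H}

namespace IsParsevalKFrame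

theorem isKFrame (h : IsParsevalKFrame K x) : IsKFrame K x :=
  ⟨1, ‖K.adjoint‖ ^ 2 + 1, one_pos, by positivity, fun v =>
    ⟨(h v).summable, by rw [(h v).tsum_eq, one_mul],
      by rw [(h v).tsum_eq]; exact K.adjoint.sq_norm_apply_le v⟩⟩

theorem isBessel_adjoint (h : IsParsevalKFrame K x) : IsBessel fun n => K.adjoint (x n) := by
  refine ⟨‖K.adjoint ∘L K‖ ^ 2 + 1, by positivity, fun v => ?_⟩
  simp only [ContinuousLinearMap.adjoint_inner_right]
  exact ⟨(h (K v)).summable, (h (K v)).tsum_eq ▸ (K.adjoint ∘L K).sq_norm_apply_le v⟩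

theorem adjoint_eq_zero (h : IsParsevalKFrame K x) {v : H} (hv : ∀ n, inner ℂ v (x n) = 0) :
    K.adjoint v = 0 := by
  have h0 : HasSum (fun n => ‖(inner ℂ v (x n) : ℂ)‖ ^ 2) 0 := by
    simp [hv, hasSum_zero]
  simpa using (h v).unique h0

theorem apply_mem_closure_span (h : IsParsevalKFrame K x) (w : H) :
    K w ∈ (span ℂ (Set.range x)).topologicalClosure := by
  rw [← orthogonal_orthogonal_eq_closure, mem_orthogonal]
  intro v hv
  have hv' : ∀ n, inner ℂ v (x n) = 0 := fun n =>
    (mem_orthogonal' _ v).1 hv _ (subset_span ⟨n, rfl⟩)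
  rw [← ContinuousLinearMap.adjoint_inner_left, h.adjoint_eq_zero hv', inner_zero_left]

end IsParsevalKFrame

namespace IsKONB

theorem isParsevalKFrame (h : IsKONB K x) : IsParsevalKFrame K x := h.2

theorem hasSum_inner_smul_apply (h : IsKONB K x) (w : H) :
    HasSum (fun n => inner ℂ (x n) (K w) • x n) (K w) :=
  h.1.hasSum_inner_smul_of_mem_closure (h.isParsevalKFrame.apply_mem_closure_span w)

theorem isKDual_adjoint (h : IsKONB K x) : IsKDual K (fun n => K.adjoint (x n)) x :=
  ⟨h.isParsevalKFrame.isBessel_adjoint, fun v => by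
    simpa only [ContinuousLinearMap.adjoint_inner_left] using h.hasSum_inner_smul_apply v⟩

theorem eq_adjoint_of_isKDual (h : IsKONB K x) {d : ℕ → H} (hd : IsKDual K d x) :
    d = fun n => K.adjoint (x n) := by
  funext m
  refine ext_inner_right ℂ fun v => ?_
  rw [ContinuousLinearMap.adjoint_inner_left, h.1.inner_left_eq_of_hasSum (hd.2 v)]

end IsKONB

end Frames

section DirectSum

open WithLp

variable {E F : Type*} [NormedAddCommGroup E] [NormedAddCommGroup F]

@[simp]
theorem pairSeq_apply (x : ℕ → E) (y : ℕ → F) (n : ℕ) :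
    pairSeq x y n = toLp 2 (x n, y n) := rfl

variable [InnerProductSpace ℂ E] [InnerProductSpace ℂ F]

@[simp]
theorem dsum_toLp (K : E →L[ℂ] E) (L : F →L[ℂ] F) (a : E) (b : F) :
    dsum K L (toLp 2 (a, b)) = toLp 2 (K a, L b) := rfl

theorem IsBessel.fst {f : ℕ → E} {g : ℕ → F} (h : IsBessel (pairSeq f g)) : IsBessel f := by
  obtain ⟨B, hB, hbd⟩ := h
  refine ⟨B, hB, fun v => ?_⟩
  simpa [prod_inner_apply, prod_norm_sq_eq_of_L2] using hbd (toLp 2 (v, 0))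

theorem IsBessel.snd {f : ℕ → E} {g : ℕ → F} (h : IsBessel (pairSeq f g)) : IsBessel g := by
  obtain ⟨B, hB, hbd⟩ := h
  refine ⟨B, hB, fun v => ?_⟩
  simpa [prod_inner_apply, prod_norm_sq_eq_of_L2] using hbd (toLp 2 (0, v))

variable [CompleteSpace E] [CompleteSpace F] {K : E →L[ℂ] E} {L : F →L[ℂ] F}

theorem adjoint_dsum : (dsum K L).adjoint = dsum K.adjoint L.adjoint := by
  refine ((ContinuousLinearMap.eq_adjoint_iff _ _).2 fun u v => ?_).symm
  simp [dsum, prod_inner_apply, ContinuousLinearMap.adjoint_inner_left]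

theorem pairSeq_adjoint (x : ℕ → E) (y : ℕ → F) :
    pairSeq (fun n => K.adjoint (x n)) (fun n => L.adjoint (y n)) =
      fun n => (dsum K L).adjoint (pairSeq x y n) := by
  funext n
  simp [adjoint_dsum]

variable {x : ℕ → E} {y : ℕ → F}

theorem IsParsevalKFrame.fst (h : IsParsevalKFrame (dsum K L) (pairSeq x y)) :
    IsParsevalKFrame K x := fun v => by
  simpa [adjoint_dsum, prod_inner_apply, prod_norm_sq_eq_of_L2] using h (toLp 2 (v, 0))

theorem IsParsevalKFrame.snd (h : IsParsevalKFrame (dsum K L) (pairSeq x y)) :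
    IsParsevalKFrame L y := fun v => by
  simpa [adjoint_dsum, prod_inner_apply, prod_norm_sq_eq_of_L2] using h (toLp 2 (0, v))

namespace IsKDual

variable {f : ℕ → E} {g : ℕ → F}

theorem hasSum_fst (h : IsKDual (dsum K L) (pairSeq f g) (pairSeq x y)) (v : E) (w : F) :
    HasSum (fun n => (inner ℂ (f n) v + inner ℂ (g n) w) • x n) (K v) := by
  simpa [prod_inner_apply] using (h.2 (toLp 2 (v, w))).mapL (fstL 2 ℂ E F)

theorem hasSum_snd (h : IsKDual (dsum K L) (pairSeq f g) (pairSeq x y)) (v : E) (w : F) :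
    HasSum (fun n => (inner ℂ (f n) v + inner ℂ (g n) w) • y n) (L w) := by
  simpa [prod_inner_apply] using (h.2 (toLp 2 (v, w))).mapL (sndL 2 ℂ E F)

theorem fst (h : IsKDual (dsum K L) (pairSeq f g) (pairSeq x y)) : IsKDual K f x :=
  ⟨h.1.fst, fun v => by simpa using h.hasSum_fst v 0⟩

theorem snd (h : IsKDual (dsum K L) (pairSeq f g) (pairSeq x y)) : IsKDual L g y :=
  ⟨h.1.snd, fun w => by simpa using h.hasSum_snd 0 w⟩

theorem not_injective_synthesis_fst (h : IsKDual (dsum K L) (pairSeq f g) (pairSeq x y))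
    (hL : L ≠ 0) (T : lp (fun _ : ℕ => ℂ) 2 →L[ℂ] E)
    (hT : ∀ a : lp (fun _ : ℕ => ℂ) 2, HasSum (fun n => a n • x n) (T a)) :
    ¬ Function.Injective T := by
  obtain ⟨u, hu⟩ : ∃ u, L u ≠ 0 := by
    by_contra! h0
    exact hL (ContinuousLinearMap.ext h0)
  let a : lp (fun _ : ℕ => ℂ) 2 := ⟨fun n => inner ℂ (g n) u, h.1.snd.memℓp_inner u⟩
  have hx : HasSum (fun n => a n • x n) 0 := by simpa using h.hasSum_fst 0 u
  have hy : HasSum (fun n => a n • y n) (L u) := by simpa using h.hasSum_snd 0 u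
  intro hinj
  have ha : a = 0 := hinj (((hT a).unique hx).trans (map_zero T).symm)
  exact hu (hy.unique (by simp [ha, hasSum_zero]))

theorem not_injective_synthesis_snd (h : IsKDual (dsum K L) (pairSeq f g) (pairSeq x y))
    (hK : K ≠ 0) (T : lp (fun _ : ℕ => ℂ) 2 →L[ℂ] F)
    (hT : ∀ a : lp (fun _ : ℕ => ℂ) 2, HasSum (fun n => a n • y n) (T a)) :
    ¬ Function.Injective T := by
  obtain ⟨u, hu⟩ : ∃ u, K u ≠ 0 := by
    by_contra! h0
    exact hK (ContinuousLinearMap.ext h0)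
  let a : lp (fun _ : ℕ => ℂ) 2 := ⟨fun n => inner ℂ (f n) u, h.1.fst.memℓp_inner u⟩
  have hx : HasSum (fun n => a n • x n) (K u) := by simpa using h.hasSum_fst u 0
  have hy : HasSum (fun n => a n • y n) 0 := by simpa using h.hasSum_snd u 0
  intro hinj
  have ha : a = 0 := hinj (((hT a).unique hy).trans (map_zero T).symm)
  exact hu (hx.unique (by simp [ha, hasSum_zero]))

end IsKDual

end DirectSum

/-- let `K ≠ 0`, `L ≠ 0` and let `{xₙ ⊕ yₙ}` be a `K ⊕ L`-orthonormal basis for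
`H₁ ⊕ H₂`, with `T₁, T₂` the synthesis operators of `{xₙ}, {yₙ}`. Then:
(a) `{K*(xₙ) ⊕ L*(yₙ)}` is the unique `K ⊕ L`-dual frame to `{xₙ ⊕ yₙ}`;
(b) `{xₙ}` is a non-`K`-minimal `K`-frame for `H₁` with `K`-dual frame `{K*(xₙ)}`;
(c) `{yₙ}` is a non-`L`-minimal `L`-frame for `H₂` with `L`-dual frame `{L*(yₙ)}`. -/
theorem pair_konb_properties (K : H₁ →L[ℂ] H₁) (L : H₂ →L[ℂ] H₂)
    (hK : K ≠ 0) (hL : L ≠ 0)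
    (x : ℕ → H₁) (y : ℕ → H₂)
    (h : IsKONB (dsum K L) (pairSeq x y))
    (T₁ : lp (fun _ : ℕ => ℂ) 2 →L[ℂ] H₁)
    (hT₁ : ∀ a : lp (fun _ : ℕ => ℂ) 2, HasSum (fun n => a n • x n) (T₁ a))
    (T₂ : lp (fun _ : ℕ => ℂ) 2 →L[ℂ] H₂)
    (hT₂ : ∀ a : lp (fun _ : ℕ => ℂ) 2, HasSum (fun n => a n • y n) (T₂ a)) :
    (IsKDual (dsum K L) (pairSeq (fun n => K.adjoint (x n)) (fun n => L.adjoint (y n)))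
        (pairSeq x y) ∧
      ∀ d : ℕ → WithLp 2 (H₁ × H₂), IsKDual (dsum K L) d (pairSeq x y) →
        d = pairSeq (fun n => K.adjoint (x n)) (fun n => L.adjoint (y n))) ∧
    (IsKFrame K x ∧ ¬ Function.Injective T₁ ∧ IsKDual K (fun n => K.adjoint (x n)) x) ∧
    (IsKFrame L y ∧ ¬ Function.Injective T₂ ∧ IsKDual L (fun n => L.adjoint (y n)) y) := by
  have hdual : IsKDual (dsum K L)
      (pairSeq (fun n => K.adjoint (x n)) (fun n => L.adjoint (y n))) (pairSeq x y) :=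
    pairSeq_adjoint x y ▸ h.isKDual_adjoint
  exact ⟨⟨hdual, fun d hd => pairSeq_adjoint x y ▸ h.eq_adjoint_of_isKDual hd⟩,
    ⟨h.isParsevalKFrame.fst.isKFrame, hdual.not_injective_synthesis_fst hL T₁ hT₁, hdual.fst⟩,
    ⟨h.isParsevalKFrame.snd.isKFrame, hdual.not_injective_synthesis_snd hK T₂ hT₂, hdual.snd⟩⟩
end
end
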